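/- arXiv:1904.09907 — 2 statements merged into one kernel-verified Lean document; each statement's English description precedes it below -/
import Mathlib

section
/- Let 𝒱 be a partition of ω* into clopen sets, and let G be a directed graph with vertex set 𝒱. The following are equivalent: (1) G is transitive; (2) G = Hit(𝒱,h) for some h ∈ Iso(σ); (3) G = Hit(𝒱,h) for some h ∈ Iso(σ⁻¹). -/
open Set TopologicalSpace

noncomputable section

/-- `ω*`, the Stone–Čech remainder `βω ∖ ω`: the space of free (non-principal)
ultrafilters on `ℕ`, as a subspace of `βℕ = Ultrafilter ℕ` (whose topology is
generated by the clopen sets `A* = {u : A ∈ u}` for `A ⊆ ℕ`). -/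
abbrev NStar : Type := {u : Ultrafilter ℕ // ∀ n : ℕ, u ≠ pure n}

lemma free_map_add (u : NStar) : ∀ n : ℕ, Ultrafilter.map (· + 1) u.1 ≠ pure n := by
  intro n hn
  have h1 : (· + 1) ⁻¹' {n} ∈ u.1 := by
    have : {n} ∈ Ultrafilter.map (· + 1) u.1 := by
      rw [hn]; exact Ultrafilter.mem_pure.mpr rfl
    exact this
  have hfin : ((· + 1) ⁻¹' {n} : Set ℕ).Finite := by
    apply Set.Finite.subset (Set.finite_singleton (n - 1))
    intro x hx
    simp only [Set.mem_preimage, Set.mem_singleton_iff] at hx ⊢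
    omega
  obtain ⟨x, -, hx⟩ := Ultrafilter.eq_pure_of_finite_mem hfin h1
  exact u.2 x hx

lemma free_map_sub (u : NStar) : ∀ n : ℕ, Ultrafilter.map (· - 1) u.1 ≠ pure n := by
  intro n hn
  have h1 : (· - 1) ⁻¹' {n} ∈ u.1 := by
    have : {n} ∈ Ultrafilter.map (· - 1) u.1 := by
      rw [hn]; exact Ultrafilter.mem_pure.mpr rfl
    exact this
  have hfin : ((· - 1) ⁻¹' {n} : Set ℕ).Finite := by
    apply Set.Finite.subset (Set.toFinite {0, 1, n + 1})
    intro x hx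
    simp only [Set.mem_preimage, Set.mem_singleton_iff] at hx
    simp only [Set.mem_insert_iff, Set.mem_singleton_iff]
    omega
  obtain ⟨x, -, hx⟩ := Ultrafilter.eq_pure_of_finite_mem hfin h1
  exact u.2 x hx

lemma ucofinite (u : NStar) : (u.1 : Filter ℕ) ≤ Filter.cofinite := by
  rcases u.1.le_cofinite_or_eq_pure with h | ⟨a, ha⟩
  · exact h
  · exact absurd ha (u.2 a)

lemma left_inv_aux (u : NStar) :
    Ultrafilter.map (· - 1) (Ultrafilter.map (· + 1) u.1) = u.1 := by
  apply Ultrafilter.coe_injective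
  rw [Ultrafilter.coe_map, Ultrafilter.coe_map, Filter.map_map]
  have : ((· - 1) ∘ (· + 1) : ℕ → ℕ) = id := by funext x; simp
  rw [this, Filter.map_id]

lemma right_inv_aux (u : NStar) :
    Ultrafilter.map (· + 1) (Ultrafilter.map (· - 1) u.1) = u.1 := by
  apply Ultrafilter.coe_injective
  rw [Ultrafilter.coe_map, Ultrafilter.coe_map, Filter.map_map]
  have h1 : ((· + 1) ∘ (· - 1) : ℕ → ℕ) =ᶠ[(u.1 : Filter ℕ)] id := by
    apply ucofinite u
    have : {x : ℕ | ¬ ((· + 1) ∘ (· - 1) : ℕ → ℕ) x = id x} ⊆ {0} := by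
      intro x hx
      simp only [Function.comp_apply, id_eq, Set.mem_setOf_eq] at hx
      simp only [Set.mem_singleton_iff]
      omega
    exact Set.Finite.subset (Set.finite_singleton 0) this
  calc Filter.map ((· + 1) ∘ (· - 1)) (u.1 : Filter ℕ)
      = Filter.map id (u.1 : Filter ℕ) := Filter.map_congr h1
    _ = (u.1 : Filter ℕ) := Filter.map_id

lemma continuous_umap (m : ℕ → ℕ) :
    Continuous (Ultrafilter.map m : Ultrafilter ℕ → Ultrafilter ℕ) := by
  rw [ultrafilterBasis_is_basis.continuous_iff]
  rintro _ ⟨s, rfl⟩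
  exact ultrafilter_isOpen_basic (m ⁻¹' s)

/-- The shift map on `ω*`: it sends `u` to the ultrafilter generated by
`{A + 1 : A ∈ u}`, i.e. the image ultrafilter of `u` under `n ↦ n + 1`. -/
def shiftF (u : NStar) : NStar := ⟨Ultrafilter.map (· + 1) u.1, free_map_add u⟩

/-- The inverse of the shift map on `ω*`, induced by the predecessor function. -/
def shiftInvF (u : NStar) : NStar := ⟨Ultrafilter.map (· - 1) u.1, free_map_sub u⟩

/-- The shift map `σ : ω* → ω*` as a self-homeomorphism of `ω*`. -/
def sigmaShift : NStar ≃ₜ NStar :=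
  { toFun := shiftF
    invFun := shiftInvF
    left_inv := fun u => Subtype.ext (left_inv_aux u)
    right_inv := fun u => Subtype.ext (right_inv_aux u)
    continuous_toFun :=
      Continuous.subtype_mk ((continuous_umap (· + 1)).comp continuous_subtype_val) _
    continuous_invFun :=
      Continuous.subtype_mk ((continuous_umap (· - 1)).comp continuous_subtype_val) _ }

/-- `f` and `g` are isomorphic dynamical systems on `ω*`: there is `h ∈ H(ω*)`
with `h ∘ f = g ∘ h`. -/
def Isomorphic (f g : NStar ≃ₜ NStar) : Prop :=
  ∃ h : NStar ≃ₜ NStar, ∀ u, h (f u) = g (h u)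

/-- `Iso(σ)`: the set of members of `H(ω*)` isomorphic to the shift map `σ`. -/
def IsoSigma : Set (NStar ≃ₜ NStar) := {h | Isomorphic h sigmaShift}

/-- `Iso(σ⁻¹)`: the set of members of `H(ω*)` isomorphic to `σ⁻¹`. -/
def IsoSigmaInv : Set (NStar ≃ₜ NStar) := {h | Isomorphic h sigmaShift.symm}

/-- The compact-open topology on the group `H(X)` of self-homeomorphisms of `X`,
generated by the sets `V(K,U) = {h : h[K] ⊆ U}` for `K` compact and `U` open. -/
instance homeoCO {X : Type*} [TopologicalSpace X] : TopologicalSpace (X ≃ₜ X) :=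
  TopologicalSpace.generateFrom
    {S : Set (X ≃ₜ X) | ∃ K U : Set X, IsCompact K ∧ IsOpen U ∧
      S = {h : X ≃ₜ X | ∀ x ∈ K, h x ∈ U}}

/-- `𝒱` is a partition of `ω*` into (nonempty) clopen sets. -/
def IsClopenPartition (𝒱 : Set (Set NStar)) : Prop :=
  (∀ A ∈ 𝒱, IsClopen A ∧ A.Nonempty) ∧ 𝒱.Pairwise Disjoint ∧ ⋃₀ 𝒱 = univ

/-- `G = Hit(𝒱,h)`: for `A, B ∈ 𝒱`, `G` has an edge `A → B` iff `h[A] ∩ B ≠ ∅`. -/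
def HitEq (𝒱 : Set (Set NStar)) (h : NStar ≃ₜ NStar)
    (G : Set NStar → Set NStar → Prop) : Prop :=
  ∀ A ∈ 𝒱, ∀ B ∈ 𝒱, (G A B ↔ ((⇑h '' A) ∩ B).Nonempty)

/-- The digraph `G` with vertex set `𝒱` is transitive: any two vertices are joined
by a path of length `n ≥ 1` along edges of `G`. -/
def GraphTransitiveOn (𝒱 : Set (Set NStar))
    (G : Set NStar → Set NStar → Prop) : Prop :=
  ∀ A ∈ 𝒱, ∀ B ∈ 𝒱, ∃ n : ℕ, 1 ≤ n ∧ ∃ v : ℕ → Set NStar,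
    v 0 = A ∧ v n = B ∧ (∀ i ≤ n, v i ∈ 𝒱) ∧ ∀ i < n, G (v i) (v (i + 1))

/-!
A clopen partition `𝒱` of `ω*` is `{c⁻¹(V)* : V ∈ 𝒱}` for a colouring `c : ℕ → 𝒱`, and then
`σ[c⁻¹(V)*] ∩ c⁻¹(W)*` is nonempty exactly when the step `V → W` occurs infinitely often along `c`.
Conjugating `σ` by a homeomorphism only changes the colouring, so for `h ∈ Iso(σ)` the graph
`Hit(𝒱, h)` consists of the steps taken infinitely often by a sequence visiting every vertex
infinitely often; it is transitive because eventually every step of that sequence is an edge.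
Conversely, a transitive graph is realised by running forever around a closed walk through all of
its edges: a permutation of `ℕ` matching this walk with `c` induces the conjugating homeomorphism.
Reversing all edges turns `σ` into `σ⁻¹`.
-/

open Function

section Walks

variable {α : Type*} {𝒱 : Set α} {G : α → α → Prop}

def IsWalkOn (𝒱 : Set α) (G : α → α → Prop) (v : ℕ → α) (n : ℕ) : Prop :=
  (∀ i ≤ n, v i ∈ 𝒱) ∧ ∀ i < n, G (v i) (v (i + 1))

/-- `GraphTransitiveOn` for digraphs on an arbitrary vertex type. -/
def IsTransitiveOn (𝒱 : Set α) (G : α → α → Prop) : Prop :=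
  ∀ a ∈ 𝒱, ∀ b ∈ 𝒱, ∃ n, 1 ≤ n ∧ ∃ v : ℕ → α, v 0 = a ∧ v n = b ∧ IsWalkOn 𝒱 G v n

theorem IsTransitiveOn.flip (h : IsTransitiveOn 𝒱 G) : IsTransitiveOn 𝒱 (flip G) := by
  intro a ha b hb
  obtain ⟨n, hn, v, hv0, hvn, hmem, hG⟩ := h b hb a ha
  refine ⟨n, hn, fun i => v (n - i), by simpa using hvn, by simpa using hv0,
    fun i _ => hmem _ (Nat.sub_le n i), fun i hi => ?_⟩
  have hi' : n - i = n - (i + 1) + 1 := by omega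
  simpa only [Function.flip_def, hi'] using hG (n - (i + 1)) (by omega)

def seqAppend (v w : ℕ → α) (m i : ℕ) : α :=
  if i ≤ m then v i else w (i - (m + 1))

theorem seqAppend_of_le {v w : ℕ → α} {m i : ℕ} (h : i ≤ m) : seqAppend v w m i = v i :=
  if_pos h

theorem seqAppend_add (v w : ℕ → α) (m j : ℕ) : seqAppend v w m (m + 1 + j) = w j := by
  rw [seqAppend, if_neg (by omega), Nat.add_sub_cancel_left]

theorem IsWalkOn.append {v w : ℕ → α} {m n : ℕ} (hv : IsWalkOn 𝒱 G v m)
    (hw : IsWalkOn 𝒱 G w n) (hvw : G (v m) (w 0)) :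
    IsWalkOn 𝒱 G (seqAppend v w m) (m + 1 + n) := by
  have hsplit : ∀ i, i ≤ m ∨ ∃ j, i = m + 1 + j := fun i => by
    rcases le_or_gt i m with h | h
    · exact .inl h
    · exact .inr ⟨i - (m + 1), by omega⟩
  constructor
  · intro i hi
    rcases hsplit i with h | ⟨j, rfl⟩
    · rw [seqAppend_of_le h]; exact hv.1 i h
    · rw [seqAppend_add]; exact hw.1 j (by omega)
  · intro i hi
    rcases hsplit i with h | ⟨j, rfl⟩
    · rcases h.lt_or_eq with h | rfl
      · rw [seqAppend_of_le h, seqAppend_of_le h.le]; exact hv.2 i h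
      · rw [seqAppend_of_le le_rfl, ← add_zero (i + 1), seqAppend_add]; exact hvw
    · rw [seqAppend_add, add_assoc, seqAppend_add]; exact hw.2 j (by omega)

theorem IsTransitiveOn.exists_walk_traversing (htrans : IsTransitiveOn 𝒱 G)
    (l : List (α × α)) (hl : ∀ p ∈ l, p.1 ∈ 𝒱 ∧ p.2 ∈ 𝒱 ∧ G p.1 p.2)
    {a b : α} (ha : a ∈ 𝒱) (hb : b ∈ 𝒱) :
    ∃ n, 1 ≤ n ∧ ∃ v : ℕ → α, v 0 = a ∧ v n = b ∧ IsWalkOn 𝒱 G v n ∧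
      ∀ p ∈ l, ∃ i < n, v i = p.1 ∧ v (i + 1) = p.2 := by
  induction l generalizing a with
  | nil =>
    obtain ⟨n, hn, v, hv0, hvn, hv⟩ := htrans a ha b hb
    exact ⟨n, hn, v, hv0, hvn, hv, by simp⟩
  | cons p l ih =>
    obtain ⟨hp₁, hp₂, hp⟩ := hl p List.mem_cons_self
    obtain ⟨m, -, v, hv0, hvm, hv⟩ := htrans a ha p.1 hp₁
    obtain ⟨n, -, w, hw0, hwn, hw, hwl⟩ := ih (fun q hq => hl q (List.mem_cons_of_mem p hq)) hp₂
    refine ⟨m + 1 + n, by omega, seqAppend v w m, seqAppend_of_le (Nat.zero_le m) ▸ hv0,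
      by rw [seqAppend_add, hwn], hv.append hw (by rwa [hvm, hw0]), ?_⟩
    rintro q (_ | ⟨_, hq⟩)
    · exact ⟨m, by omega, by rw [seqAppend_of_le le_rfl, hvm],
        by rw [← add_zero (m + 1), seqAppend_add, hw0]⟩
    · obtain ⟨j, hj, hwj, hwj'⟩ := hwl q hq
      exact ⟨m + 1 + j, by omega, by rw [seqAppend_add, hwj],
        by rw [add_assoc, seqAppend_add, hwj']⟩

theorem apply_mod_of_le {v : ℕ → α} {L j : ℕ} (hL : v 0 = v L) (hj : j ≤ L) :
    v (j % L) = v j := by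
  rcases hj.lt_or_eq with h | rfl
  · rw [Nat.mod_eq_of_lt h]
  · rw [Nat.mod_self, hL]

/-- Run forever around a closed walk through every edge. -/
theorem IsTransitiveOn.exists_seq_infinite_transitions_iff (h𝒱 : 𝒱.Finite) (hne : 𝒱.Nonempty)
    (htrans : IsTransitiveOn 𝒱 G) :
    ∃ d : ℕ → α, (∀ n, d n ∈ 𝒱) ∧ (∀ a ∈ 𝒱, {n | d n = a}.Infinite) ∧
      ∀ a ∈ 𝒱, ∀ b ∈ 𝒱, ({n | d n = a ∧ d (n + 1) = b}.Infinite ↔ G a b) := by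
  obtain ⟨a₀, ha₀⟩ := hne
  have hE : {p : α × α | p.1 ∈ 𝒱 ∧ p.2 ∈ 𝒱 ∧ G p.1 p.2}.Finite :=
    (h𝒱.prod h𝒱).subset fun p hp => ⟨hp.1, hp.2.1⟩
  obtain ⟨L, hL, v, hv0, hvL, hv, hcover⟩ :=
    htrans.exists_walk_traversing hE.toFinset.toList (by simp) ha₀ ha₀
  have hstep : ∀ n, v ((n + 1) % L) = v (n % L + 1) := fun n => by
    rw [← Nat.mod_add_mod, apply_mod_of_le (hv0.trans hvL.symm) (Nat.mod_lt n hL)]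
  have htrans_iff : ∀ a ∈ 𝒱, ∀ b ∈ 𝒱,
      ({n | v (n % L) = a ∧ v ((n + 1) % L) = b}.Infinite ↔ G a b) := by
    intro a ha b hb
    constructor
    · intro hinf
      obtain ⟨n, rfl, hb⟩ := hinf.nonempty
      rw [hstep] at hb
      exact hb ▸ hv.2 _ (Nat.mod_lt n hL)
    · intro hab
      obtain ⟨i, hi, hva, hvb⟩ := hcover (a, b) (by simp [ha, hb, hab])
      refine Set.infinite_of_injective_forall_mem (f := fun k => i + L * k)
        (fun k k' h => Nat.eq_of_mul_eq_mul_left hL (by simpa using h)) fun k => ?_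
      simp only [Set.mem_ofPred_eq, hstep, Nat.add_mul_mod_self_left, Nat.mod_eq_of_lt hi]
      exact ⟨hva, hvb⟩
  refine ⟨fun n => v (n % L), fun n => hv.1 _ (Nat.mod_lt n hL).le, fun a ha => ?_, htrans_iff⟩
  obtain ⟨n, hn, w, hw0, -, hw⟩ := htrans a ha a ha
  have hedge : G a (w 1) := hw0 ▸ hw.2 0 hn
  exact ((htrans_iff a ha _ (hw.1 1 hn)).mpr hedge).mono fun n hn => hn.1

/-- Only finitely many steps of `c` are non-edges, so late enough `c` itself walks from any
vertex to any other. -/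
theorem isTransitiveOn_of_infinite_transitions {c : ℕ → α} (h𝒱 : 𝒱.Finite)
    (hc : ∀ n, c n ∈ 𝒱) (hfib : ∀ a ∈ 𝒱, {n | c n = a}.Infinite)
    (hG : ∀ a ∈ 𝒱, ∀ b ∈ 𝒱, {n | c n = a ∧ c (n + 1) = b}.Infinite → G a b) :
    IsTransitiveOn 𝒱 G := by
  have hbad : {n | ¬ G (c n) (c (n + 1))}.Finite := by
    refine ((h𝒱.prod h𝒱).biUnion fun p hp =>
      (?_ : {n | c n = p.1 ∧ c (n + 1) = p.2 ∧ ¬ G p.1 p.2}.Finite)).subset ?_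
    · by_contra hinf
      obtain ⟨n, -, -, hn⟩ := Set.not_finite.mp hinf |>.nonempty
      exact hn (hG _ hp.1 _ hp.2 ((Set.not_finite.mp hinf).mono fun n hn => ⟨hn.1, hn.2.1⟩))
    · intro n hn
      exact Set.mem_biUnion (x := (c n, c (n + 1))) ⟨hc n, hc (n + 1)⟩ ⟨rfl, rfl, hn⟩
  obtain ⟨N, hN⟩ := hbad.bddAbove
  intro a ha b hb
  obtain ⟨p, rfl, hp⟩ := (hfib a ha).exists_gt N
  obtain ⟨r, rfl, hr⟩ := (hfib b hb).exists_gt p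
  refine ⟨r - p, by omega, fun i => c (p + i), rfl, congrArg c (Nat.add_sub_cancel' hr.le),
    fun i _ => hc _, fun i _ => ?_⟩
  by_contra hbad_i
  exact absurd (hN hbad_i) (by omega)

end Walks

section Remainder

/-- The clopen set `S*` of `ω*`. -/
def basicSet (S : Set ℕ) : Set NStar := {u | S ∈ u.1}

theorem basicSet_inter (S T : Set ℕ) : basicSet (S ∩ T) = basicSet S ∩ basicSet T :=
  ext fun _ => Filter.inter_mem_iff

theorem basicSet_biUnion {ι : Type*} {s : Set ι} (hs : s.Finite) (S : ι → Set ℕ) :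
    basicSet (⋃ i ∈ s, S i) = ⋃ i ∈ s, basicSet (S i) := by
  ext u
  simp only [basicSet, mem_ofPred_eq, Ultrafilter.finite_biUnion_mem_iff hs, mem_iUnion₂,
    exists_prop]

theorem basicSet_nonempty_iff {S : Set ℕ} : (basicSet S).Nonempty ↔ S.Infinite := by
  constructor
  · rintro ⟨u, hu⟩ hfin
    obtain ⟨n, -, hn⟩ := Ultrafilter.eq_pure_of_finite_mem hfin hu
    exact u.2 n hn
  · intro hS
    have := hS.cofinite_inf_principal_neBot
    have hu := Ultrafilter.of_le (Filter.cofinite ⊓ Filter.principal S)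
    refine ⟨⟨Ultrafilter.of _, fun n hn => ?_⟩,
      hu (Filter.mem_inf_of_right (Filter.mem_principal_self S))⟩
    have hn' := hu (Filter.mem_inf_of_left (finite_singleton n).compl_mem_cofinite)
    rw [hn] at hn'
    exact hn' rfl

theorem isClosed_basicSet (S : Set ℕ) : IsClosed (basicSet S) :=
  (ultrafilter_isClosed_basic S).preimage continuous_subtype_val

theorem isClosed_setOf_forall_ne_pure (α : Type*) :
    IsClosed {u : Ultrafilter α | ∀ a, u ≠ pure a} := by
  have : {u : Ultrafilter α | ∀ a, u ≠ pure a} = ⋂ a, {u | ({a}ᶜ : Set α) ∈ u} := by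
    ext u
    simp only [mem_ofPred_eq, mem_iInter, Ultrafilter.compl_mem_iff_notMem]
    refine forall_congr' fun a => not_congr ⟨fun h => h ▸ rfl, fun h => ?_⟩
    obtain ⟨b, rfl, hb⟩ := Ultrafilter.eq_pure_of_finite_mem (finite_singleton a) h
    exact hb
  rw [this]
  exact isClosed_iInter fun a => ultrafilter_isClosed_basic _

instance : CompactSpace NStar :=
  isCompact_iff_compactSpace.mp (isClosed_setOf_forall_ne_pure ℕ).isCompact

theorem isTopologicalBasis_basicSet : IsTopologicalBasis (range basicSet) := by
  have := ultrafilterBasis_is_basis.isInducing (f := (Subtype.val : NStar → _)) ⟨rfl⟩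
  rwa [ultrafilterBasis, ← range_comp] at this

theorem IsClopen.exists_eq_basicSet {V : Set NStar} (hV : IsClopen V) : ∃ S, V = basicSet S := by
  obtain ⟨s, hs, rfl⟩ := (isCompact_open_iff_eq_finite_iUnion_of_isTopologicalBasis basicSet
    isTopologicalBasis_basicSet (fun S => (isClosed_basicSet S).isCompact) V).mp
    ⟨hV.isClosed.isCompact, hV.isOpen⟩
  exact ⟨⋃ S ∈ s, S, (basicSet_biUnion hs id).symm⟩

variable {𝒱 : Set (Set NStar)}

theorem IsClopenPartition.exists_mem (h : IsClopenPartition 𝒱) (u : NStar) : ∃ A ∈ 𝒱, u ∈ A :=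
  mem_sUnion.mp (h.2.2.symm ▸ mem_univ u)

theorem IsClopenPartition.finite (h : IsClopenPartition 𝒱) : 𝒱.Finite := by
  obtain ⟨𝒲, h𝒲, hfin, hcover⟩ := isCompact_univ.elim_finite_subcover_image (b := 𝒱) (c := id)
    (fun A hA => (h.1 A hA).1.isOpen) fun u _ => by simpa using h.exists_mem u
  refine hfin.subset fun A hA => ?_
  obtain ⟨u, hu⟩ := (h.1 A hA).2
  obtain ⟨B, hB, huB⟩ := mem_iUnion₂.mp (hcover (mem_univ u))
  rwa [h.2.1.eq hA (h𝒲 hB) (not_disjoint_iff.mpr ⟨u, hu, huB⟩)]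

theorem exists_coloring {α : Type*} {𝒱 : Set α} {P : α → Set NStar} (h𝒱 : 𝒱.Finite)
    (hP : ∀ a ∈ 𝒱, IsClopen (P a)) (hdisj : 𝒱.PairwiseDisjoint P)
    (hcover : ∀ u, ∃ a ∈ 𝒱, u ∈ P a) :
    ∃ c : ℕ → α, (∀ n, c n ∈ 𝒱) ∧ ∀ a ∈ 𝒱, basicSet (c ⁻¹' {a}) = P a := by
  classical
  choose! S hS using fun a ha => (hP a ha).exists_eq_basicSet
  obtain ⟨u₀, -⟩ := basicSet_nonempty_iff.mpr infinite_univ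
  obtain ⟨a₀, ha₀, -⟩ := hcover u₀
  let c n := if h : ∃ a ∈ 𝒱, n ∈ S a then h.choose else a₀
  have hc : ∀ n, c n ∈ 𝒱 ∧ ∀ a ∈ 𝒱, n ∈ S a → n ∈ S (c n) := fun n => by
    by_cases h : ∃ a ∈ 𝒱, n ∈ S a
    · simp only [c, dif_pos h]
      exact ⟨h.choose_spec.1, fun _ _ _ => h.choose_spec.2⟩
    · simp only [c, dif_neg h]
      exact ⟨ha₀, fun a ha hn => absurd ⟨a, ha, hn⟩ h⟩
  -- Near a point of `P a`, every other `S b` is avoided, so there `c` can only choose `a`.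
  have hmem : ∀ a ∈ 𝒱, ∀ u ∈ P a, c ⁻¹' {a} ∈ u.1 := by
    intro a ha u hu
    have hout : ∀ b ∈ 𝒱 \ {a}, (S b)ᶜ ∈ u.1 := fun b hb =>
      Ultrafilter.compl_mem_iff_notMem.mpr fun hub => disjoint_left.mp
        (hdisj ha hb.1 (Ne.symm hb.2)) hu ((hS b hb.1).symm ▸ hub)
    refine Filter.mem_of_superset (Filter.inter_mem ((hS a ha).symm ▸ hu)
      ((Filter.biInter_mem (h𝒱.sdiff)).mpr hout)) fun n ⟨hna, hnb⟩ => ?_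
    by_contra hne
    exact mem_iInter₂.mp hnb (c n) ⟨(hc n).1, hne⟩ ((hc n).2 a ha hna)
  refine ⟨c, fun n => (hc n).1, fun a ha => Subset.antisymm (fun u hu => ?_) (hmem a ha)⟩
  obtain ⟨b, hb, hub⟩ := hcover u
  obtain ⟨n, hna, hnb⟩ := Ultrafilter.nonempty_of_mem (Filter.inter_mem hu (hmem b hb u hub))
  exact (hna.symm.trans hnb : a = b) ▸ hub

theorem sigmaShift_image_basicSet_inter_nonempty_iff (S T : Set ℕ) :
    (sigmaShift '' basicSet S ∩ basicSet T).Nonempty ↔ (S ∩ (· + 1) ⁻¹' T).Infinite := by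
  rw [image_inter_nonempty_iff, ← basicSet_nonempty_iff, basicSet_inter]
  rfl

theorem Ultrafilter.map_symm_map {α β : Type*} (e : α ≃ β) (u : Ultrafilter α) :
    (u.map e).map e.symm = u := by
  rw [Ultrafilter.map_map, e.symm_comp_self, Ultrafilter.map_id]

theorem map_perm_ne_pure (e : Equiv.Perm ℕ) (u : NStar) (n : ℕ) : u.1.map e ≠ pure n :=
  fun h => u.2 (e.symm n) (by rw [← Ultrafilter.map_symm_map e u.1, h, Ultrafilter.map_pure])

def permHomeomorph (e : Equiv.Perm ℕ) : NStar ≃ₜ NStar where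
  toFun u := ⟨u.1.map e, map_perm_ne_pure e u⟩
  invFun u := ⟨u.1.map e.symm, map_perm_ne_pure e.symm u⟩
  left_inv u := Subtype.ext (Ultrafilter.map_symm_map e u.1)
  right_inv u := Subtype.ext (by simp)
  continuous_toFun := ((continuous_umap e).comp continuous_subtype_val).subtype_mk _
  continuous_invFun := ((continuous_umap e.symm).comp continuous_subtype_val).subtype_mk _

theorem permHomeomorph_preimage_basicSet (e : Equiv.Perm ℕ) (S : Set ℕ) :
    permHomeomorph e ⁻¹' basicSet S = basicSet (e ⁻¹' S) :=
  rfl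

end Remainder

theorem image_inter_nonempty_iff_of_semiconj {X Y : Type*} {k : X → Y} (hk : Injective k)
    {f : X → X} {g : Y → Y} (h : Semiconj k f g) (A B : Set X) :
    (f '' A ∩ B).Nonempty ↔ (g '' (k '' A) ∩ k '' B).Nonempty := by
  rw [← image_nonempty (f := k), image_inter hk, ← image_comp, h.comp_eq, image_comp]

theorem exists_perm_comp_eq {α : Type*} {𝒱 : Set α} {c d : ℕ → α} (hc : ∀ n, c n ∈ 𝒱)
    (hd : ∀ n, d n ∈ 𝒱) (hcfib : ∀ a ∈ 𝒱, {n | c n = a}.Infinite)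
    (hdfib : ∀ a ∈ 𝒱, {n | d n = a}.Infinite) : ∃ e : Equiv.Perm ℕ, c ∘ e = d := by
  classical
  have hfib : ∀ a, Nonempty ({n // d n = a} ≃ {n // c n = a}) := fun a => by
    by_cases ha : a ∈ 𝒱
    · have := (hdfib a ha).to_subtype
      have := (hcfib a ha).to_subtype
      exact (nonempty_equiv_of_countable : Nonempty ({n | d n = a} ≃ {n | c n = a}))
    · have : IsEmpty {n // d n = a} := ⟨fun n => ha (n.2 ▸ hd n)⟩
      have : IsEmpty {n // c n = a} := ⟨fun n => ha (n.2 ▸ hc n)⟩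
      exact ⟨Equiv.equivOfIsEmpty _ _⟩
  exact ⟨Equiv.ofFiberEquiv fun a => (hfib a).some, funext (Equiv.ofFiberEquiv_map _)⟩

section Hit

variable {𝒱 : Set (Set NStar)} {G : Set NStar → Set NStar → Prop}

theorem exists_isoSigma_hitEq (hpart : IsClopenPartition 𝒱) (htrans : GraphTransitiveOn 𝒱 G) :
    ∃ h ∈ IsoSigma, HitEq 𝒱 h G := by
  obtain ⟨c, hc𝒱, hc⟩ := exists_coloring (P := id) hpart.finite (fun A hA => (hpart.1 A hA).1)
    hpart.2.1 hpart.exists_mem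
  obtain ⟨d, hd𝒱, hdfib, hdG⟩ :=
    IsTransitiveOn.exists_seq_infinite_transitions_iff hpart.finite ⟨c 0, hc𝒱 0⟩ htrans
  obtain ⟨e, he⟩ := exists_perm_comp_eq hc𝒱 hd𝒱
    (fun A hA => basicSet_nonempty_iff.mp ((hc A hA).symm ▸ (hpart.1 A hA).2)) hdfib
  let k := (permHomeomorph e).symm
  have hk : ∀ A ∈ 𝒱, k '' A = basicSet (d ⁻¹' {A}) := fun A hA => by
    rw [Homeomorph.image_symm, ← he, preimage_comp, ← permHomeomorph_preimage_basicSet]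
    exact congrArg _ (hc A hA).symm
  have hconj : Semiconj k (k.trans (sigmaShift.trans k.symm)) sigmaShift :=
    fun u => k.apply_symm_apply _
  refine ⟨_, ⟨k, hconj⟩, fun A hA B hB => ?_⟩
  rw [image_inter_nonempty_iff_of_semiconj k.injective hconj, hk A hA, hk B hB,
    sigmaShift_image_basicSet_inter_nonempty_iff]
  exact (hdG A hA B hB).symm

theorem graphTransitiveOn_of_hitEq (hpart : IsClopenPartition 𝒱) {h : NStar ≃ₜ NStar}
    (hh : h ∈ IsoSigma) (hG : HitEq 𝒱 h G) : GraphTransitiveOn 𝒱 G := by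
  obtain ⟨k, hk⟩ := hh
  obtain ⟨c, hc𝒱, hc⟩ := exists_coloring (P := (k '' ·)) hpart.finite
    (fun A hA => k.preimage_symm ▸ (hpart.1 A hA).1.preimage k.symm.continuous)
    (fun A hA B hB hAB => (disjoint_image_iff k.injective).mpr (hpart.2.1 hA hB hAB))
    (fun u => by
      obtain ⟨A, hA, hu⟩ := hpart.exists_mem (k.symm u)
      exact ⟨A, hA, _, hu, k.apply_symm_apply u⟩)
  refine isTransitiveOn_of_infinite_transitions hpart.finite hc𝒱
    (fun A hA => basicSet_nonempty_iff.mp ((hc A hA).symm ▸ (hpart.1 A hA).2.image k))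
    fun A hA B hB hinf => ?_
  rw [hG A hA B hB, image_inter_nonempty_iff_of_semiconj k.injective hk, ← hc A hA, ← hc B hB,
    sigmaShift_image_basicSet_inter_nonempty_iff]
  exact hinf

theorem mem_isoSigmaInv_iff {h : NStar ≃ₜ NStar} : h ∈ IsoSigmaInv ↔ h.symm ∈ IsoSigma :=
  ⟨fun ⟨k, hk⟩ => ⟨k, Semiconj.inverses_right hk h.apply_symm_apply sigmaShift.apply_symm_apply⟩,
    fun ⟨k, hk⟩ => ⟨k, Semiconj.inverses_right hk h.symm_apply_apply sigmaShift.symm_apply_apply⟩⟩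

theorem hitEq_symm_iff {h : NStar ≃ₜ NStar} : HitEq 𝒱 h.symm (flip G) ↔ HitEq 𝒱 h G := by
  have hswap : ∀ A B, (h.symm '' A ∩ B).Nonempty ↔ (h '' B ∩ A).Nonempty := fun A B => by
    rw [image_inter_nonempty_iff, Homeomorph.preimage_symm, inter_comm]
  exact ⟨fun H A hA B hB => (H B hB A hA).trans (hswap B A),
    fun H A hA B hB => (H B hB A hA).trans (hswap A B).symm⟩

theorem exists_isoSigmaInv_hitEq_iff :
    (∃ h ∈ IsoSigmaInv, HitEq 𝒱 h G) ↔ ∃ h ∈ IsoSigma, HitEq 𝒱 h (flip G) := by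
  constructor
  · rintro ⟨h, hh, hG⟩
    exact ⟨h.symm, mem_isoSigmaInv_iff.mp hh, hitEq_symm_iff.mpr hG⟩
  · rintro ⟨h, hh, hG⟩
    refine ⟨h.symm, mem_isoSigmaInv_iff.mpr ?_, hitEq_symm_iff.mp ?_⟩ <;> rwa [h.symm_symm]

end Hit

/-- Let `𝒱` be a partition of `ω*` into clopen sets and `G` a digraph with vertex
set `𝒱`. The following are equivalent: (1) `G` is transitive;
(2) `G = Hit(𝒱,h)` for some `h ∈ Iso(σ)`; (3) `G = Hit(𝒱,h)` for some
`h ∈ Iso(σ⁻¹)`. -/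
theorem stmt_12 (𝒱 : Set (Set NStar)) (hpart : IsClopenPartition 𝒱)
    (G : Set NStar → Set NStar → Prop) :
    (GraphTransitiveOn 𝒱 G ↔ ∃ h ∈ IsoSigma, HitEq 𝒱 h G) ∧
    (GraphTransitiveOn 𝒱 G ↔ ∃ h ∈ IsoSigmaInv, HitEq 𝒱 h G) := by
  have hσ : ∀ G, GraphTransitiveOn 𝒱 G ↔ ∃ h ∈ IsoSigma, HitEq 𝒱 h G := fun G =>
    ⟨exists_isoSigma_hitEq hpart, fun ⟨_, hh, hG⟩ => graphTransitiveOn_of_hitEq hpart hh hG⟩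
  refine ⟨hσ G, ?_⟩
  rw [exists_isoSigmaInv_hitEq_iff, ← hσ]
  exact ⟨IsTransitiveOn.flip, IsTransitiveOn.flip⟩
end
end

section
/- If {U_n : n ∈ ω} is a countable family of dense open subsets of the subspace Iso(σ) of H(ω*), then the set of trivial maps belonging to ⋂_{n ∈ ω} U_n is dense in Iso(σ). -/
open Set TopologicalSpace

noncomputable section

/-- `f : ω → ω` is a mod-finite permutation of `ω`: it restricts to a bijection
between two cofinite subsets of `ω`. -/
def ModFinPerm (f : ℕ → ℕ) : Prop :=
  ∃ A B : Set ℕ, A.Finite ∧ B.Finite ∧ Set.BijOn f Aᶜ Bᶜ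

/-- `h ∈ H(ω*)` is trivial: it is induced by a mod-finite permutation `f` of `ω`,
i.e. `h(u)` is the ultrafilter generated by `{f[A] : A ∈ u}` for every `u ∈ ω*`. -/
def IsTrivialHomeo (h : NStar ≃ₜ NStar) : Prop :=
  ∃ f : ℕ → ℕ, ModFinPerm f ∧
    ∀ (u : NStar) (A : Set ℕ), A ∈ u.1 → f '' A ∈ (h u).1

/-!
Basic neighbourhoods in `H(ω*)` are finite sets `L` of conditions `h[A*] ⊆ B*`. Shrinking such
neighbourhoods `L 0 ⊆ L 1 ⊆ ⋯` into the given open set and into the `U n`, it suffices to find an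
enumeration `x` of `ℕ` such that for every `N` almost every step `x i ↦ x (i + 1)` is legal for
`L N`, i.e. respects every `A ↦ B` in `L N`: the shift along `x` is then a trivial map conjugate
to `σ` lying in all these neighbourhoods.

The enumeration is built in stages, each appending to a finite injective path a legal segment
through the least number not yet used. Such segments exist because a map `h ∈ Iso(σ)` in the
neighbourhood `L` lets every infinite atom of the Boolean algebra generated by the sets `A` reach
every other one by legal steps: the atoms reachable from a given one span an `h`-invariant
clopen set, and `σ`, hence `h`, has no invariant clopen sets besides `∅` and `ω*`.
-/

open Filter

theorem exists_seq_of_forall_exists {α : Type*} {p : ℕ → α → Prop} {r : ℕ → α → α → Prop}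
    {a : α} (ha : p 0 a) (h : ∀ n a, p n a → ∃ b, p (n + 1) b ∧ r n a b) :
    ∃ f : ℕ → α, f 0 = a ∧ ∀ n, p n (f n) ∧ r n (f n) (f (n + 1)) := by
  choose! g hg using h
  let f : ℕ → α := fun n => Nat.rec a (fun k b => g k b) n
  have hf : ∀ n, p n (f n) := fun n => Nat.rec ha (fun k ih => (hg k _ ih).1) n
  exact ⟨f, rfl, fun n => ⟨hf n, (hg n _ (hf n)).2⟩⟩

lemma Nat.finite_or_finite_compl_of_finite_boundary {D : Set ℕ}
    (h : {n | n ∈ D ∧ n + 1 ∉ D}.Finite) : D.Finite ∨ Dᶜ.Finite := by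
  obtain ⟨N, hN⟩ := h.bddAbove
  by_cases hD : ∃ n ∈ D, N < n
  · obtain ⟨n, hnD, hNn⟩ := hD
    have hge : ∀ m, n ≤ m → m ∈ D := fun m hm => by
      induction m, hm using Nat.le_induction with
      | base => exact hnD
      | succ k hk hkD =>
        by_contra hk1
        have : k ≤ N := hN ⟨hkD, hk1⟩
        omega
    exact Or.inr ((finite_Iio n).subset fun m hm => not_le.1 fun h => hm (hge m h))
  · push Not at hD
    exact Or.inl ((finite_Iic N).subset hD)

section PrefixLimit

variable {α : Type*} {P : ℕ → List α}

lemma isPrefix_of_le (hP : ∀ n, P n <+: P (n + 1)) {m n : ℕ} (hmn : m ≤ n) : P m <+: P n := by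
  induction n, hmn using Nat.le_induction with
  | base => exact List.prefix_refl _
  | succ k _ ih => exact ih.trans (hP k)

lemma exists_equiv_getElem_eq (hP : ∀ n, P n <+: P (n + 1)) (hlen : ∀ n, n < (P n).length)
    (hnd : ∀ n, (P n).Nodup) (hcov : ∀ a, ∃ n, a ∈ P n) :
    ∃ x : ℕ ≃ α, ∀ n i (hi : i < (P n).length), (P n)[i] = x i := by
  have hx : ∀ n i (hi : i < (P n).length), (P n)[i] = (P i)[i]'(hlen i) := by
    intro n i hi
    rcases le_total n i with h | h
    · exact (isPrefix_of_le hP h).getElem hi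
    · exact ((isPrefix_of_le hP h).getElem (hlen i)).symm
  have hinj : Function.Injective fun i => (P i)[i]'(hlen i) := by
    intro i j hij
    have hi : i < (P (max i j)).length := (le_max_left i j).trans_lt (hlen _)
    have hj : j < (P (max i j)).length := (le_max_right i j).trans_lt (hlen _)
    simp only [← hx (max i j) i hi, ← hx (max i j) j hj] at hij
    exact (hnd _).getElem_inj_iff.1 hij
  have hsurj : Function.Surjective fun i => (P i)[i]'(hlen i) := by
    intro a
    obtain ⟨n, hn⟩ := hcov a
    obtain ⟨i, hi, rfl⟩ := List.mem_iff_getElem.1 hn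
    exact ⟨i, (hx n i hi).symm⟩
  exact ⟨Equiv.ofBijective _ ⟨hinj, hsurj⟩, hx⟩

lemma exists_isChain_drop {R : ℕ → α → α → Prop} {S : α → α → Prop}
    (hstep : ∀ n, ∃ seg, P (n + 1) = P n ++ seg ∧ seg.IsChain (R n) ∧
      ∀ a ∈ (P n).getLast?, ∀ b ∈ seg.head?, R n a b)
    (hRS : ∀ᶠ n in atTop, ∀ a b, R n a b → S a b) : ∃ j, ∀ n, ((P n).drop j).IsChain S := by
  obtain ⟨K, hK⟩ := hRS.exists_forall_of_atTop
  have hP : ∀ n, P n <+: P (n + 1) := fun n =>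
    let ⟨_, h, _⟩ := hstep n
    h ▸ List.prefix_append _ _
  refine ⟨(P K).length, fun n => ?_⟩
  induction n with
  | zero => rw [List.drop_eq_nil_of_le (isPrefix_of_le hP (Nat.zero_le K)).length_le]; exact .nil
  | succ n ih =>
    by_cases hn : n + 1 ≤ K
    · rw [List.drop_eq_nil_of_le (isPrefix_of_le hP hn).length_le]; exact .nil
    have hKn : K ≤ n := by omega
    obtain ⟨seg, hseg, hchain, hjoin⟩ := hstep n
    rw [hseg, List.drop_append_of_le_length (isPrefix_of_le hP hKn).length_le]
    refine ih.append (hchain.imp fun a b => hK n hKn a b)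
      fun a ha b hb => hK n hKn a b (hjoin a ?_ b hb)
    rw [List.getLast?_drop] at ha
    split_ifs at ha
    · simp at ha
    · exact ha

lemma eventually_rel_of_isChain_drop {x : ℕ → α} (hlen : ∀ n, n < (P n).length)
    (hx : ∀ n i (hi : i < (P n).length), (P n)[i] = x i) {S : α → α → Prop} {j : ℕ}
    (hS : ∀ n, ((P n).drop j).IsChain S) : ∀ᶠ i in atTop, S (x i) (x (i + 1)) := by
  refine Filter.eventually_atTop.2 ⟨j, fun i hij => ?_⟩
  have hi := hlen (i + 1)
  have h := List.isChain_iff_getElem.1 (hS (i + 1)) (i - j) (by simp; omega)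
  simp only [List.getElem_drop] at h
  rwa [hx, hx, show j + (i - j) = i by omega, show j + (i - j + 1) = i + 1 by omega] at h

end PrefixLimit

def firstMissing (l : List ℕ) : ℕ :=
  Nat.find (show ∃ m, m ∉ l from l.finite_toSet.infinite_compl.nonempty)

lemma firstMissing_notMem (l : List ℕ) : firstMissing l ∉ l := Nat.find_spec (p := (· ∉ l)) _

lemma firstMissing_le_of_notMem {l : List ℕ} {m : ℕ} (h : m ∉ l) : firstMissing l ≤ m :=
  Nat.find_min' _ h

section FirstMissing

variable {P : ℕ → List ℕ}

lemma injective_firstMissing (hP : ∀ n, P n <+: P (n + 1))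
    (hmiss : ∀ n, firstMissing (P n) ∈ P (n + 1)) :
    Function.Injective fun n => firstMissing (P n) := by
  have key : ∀ m n, m < n → firstMissing (P m) ≠ firstMissing (P n) := fun m n hmn heq =>
    firstMissing_notMem (P n) (heq ▸ (isPrefix_of_le hP hmn).subset (hmiss m))
  intro m n h
  by_contra hne
  rcases lt_or_gt_of_ne hne with hlt | hlt
  exacts [key m n hlt h, key n m hlt h.symm]

lemma exists_mem_of_firstMissing_mem (hP : ∀ n, P n <+: P (n + 1))
    (hmiss : ∀ n, firstMissing (P n) ∈ P (n + 1)) (m : ℕ) : ∃ n, m ∈ P n := by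
  by_contra! h
  exact (finite_Iic m).not_infinite (infinite_of_injective_forall_mem
    (injective_firstMissing hP hmiss) fun n => firstMissing_le_of_notMem (h n))

end FirstMissing

namespace NStar

/-- The basic clopen set `A*`. -/
def star (A : Set ℕ) : Set NStar := {u | A ∈ u.1}

lemma star_mono {A B : Set ℕ} (h : A ⊆ B) : star A ⊆ star B :=
  fun _ hu => Filter.mem_of_superset hu h

lemma infinite_of_mem (u : NStar) {A : Set ℕ} (hA : A ∈ u.1) : A.Infinite := fun hfin =>
  let ⟨n, _, hn⟩ := Ultrafilter.eq_pure_of_finite_mem hfin hA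
  u.2 n hn

lemma exists_mem_of_infinite {A : Set ℕ} (hA : A.Infinite) : ∃ u : NStar, A ∈ u.1 := by
  have := hA.cofinite_inf_principal_neBot
  have hu := Ultrafilter.of_le (cofinite ⊓ 𝓟 A)
  refine ⟨⟨Ultrafilter.of _, fun n hn => ?_⟩, inf_le_right.trans' hu (mem_principal_self A)⟩
  have : ({n}ᶜ : Set ℕ) ∈ Ultrafilter.of (cofinite ⊓ 𝓟 A) :=
    inf_le_left.trans' hu (finite_singleton n).compl_mem_cofinite
  simp [hn] at this

lemma star_eq_empty_iff {A : Set ℕ} : star A = ∅ ↔ A.Finite := by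
  refine ⟨fun h => not_infinite.1 fun hA => ?_, fun hA => eq_empty_of_forall_notMem
    fun u hu => u.infinite_of_mem hu hA⟩
  obtain ⟨u, hu⟩ := exists_mem_of_infinite hA
  exact h.subset hu

lemma star_eq_univ_of_finite_compl {A : Set ℕ} (hA : Aᶜ.Finite) : star A = univ :=
  eq_univ_of_forall fun u => compl_compl A ▸ ucofinite u hA.compl_mem_cofinite

lemma star_biUnion {s : Set (Set ℕ)} (hs : s.Finite) : star (⋃ A ∈ s, A) = ⋃ A ∈ s, star A := by
  ext u
  simp only [star, mem_setOf_eq, Ultrafilter.finite_biUnion_mem_iff hs, mem_iUnion, exists_prop]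

lemma isClopen_star (A : Set ℕ) : IsClopen (star A) :=
  ⟨(ultrafilter_isClosed_basic A).preimage continuous_subtype_val,
    (ultrafilter_isOpen_basic A).preimage continuous_subtype_val⟩

instance : CompactSpace NStar := by
  refine isCompact_iff_compactSpace.mp
    (IsClosed.isCompact (?_ : IsClosed {u : Ultrafilter ℕ | ∀ n : ℕ, u ≠ pure n}))
  have : {u : Ultrafilter ℕ | ∀ n : ℕ, u ≠ pure n} = ⋂ n : ℕ, {u | ({n}ᶜ : Set ℕ) ∈ u} := by
    ext u
    simp only [mem_setOf_eq, mem_iInter, Ultrafilter.compl_mem_iff_notMem]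
    refine forall_congr' fun n => ⟨fun h hn => ?_, fun h hu => h (hu ▸ rfl)⟩
    obtain ⟨m, hm, rfl⟩ := Ultrafilter.eq_pure_of_finite_mem (finite_singleton n) hn
    exact h (by rw [mem_singleton_iff.1 hm])
  rw [this]
  exact isClosed_iInter fun n => ultrafilter_isClosed_basic _

lemma isTopologicalBasis_star : IsTopologicalBasis (range star) := by
  have : range star = (Subtype.val ⁻¹' ·) '' ultrafilterBasis ℕ := by
    rw [ultrafilterBasis, ← range_comp]
    rfl
  rw [this]
  exact ultrafilterBasis_is_basis.isInducing Topology.IsInducing.subtypeVal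

lemma exists_star_between {K U : Set NStar} (hK : IsCompact K) (hU : IsOpen U) (hKU : K ⊆ U) :
    ∃ A : Set ℕ, K ⊆ star A ∧ star A ⊆ U := by
  obtain ⟨s, hsU, hs, hKs⟩ := hK.elim_finite_subcover_image (b := {A | star A ⊆ U}) (c := star)
    (fun A _ => (isClopen_star A).isOpen) fun u hu => by
      obtain ⟨_, ⟨A, rfl⟩, huA, hAU⟩ :=
        isTopologicalBasis_star.exists_subset_of_mem_open (hKU hu) hU
      exact mem_biUnion hAU huA
  refine ⟨⋃ A ∈ s, A, by rwa [star_biUnion hs], ?_⟩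
  rw [star_biUnion hs]
  exact iUnion₂_subset hsU

lemma exists_star_eq_of_isClopen {C : Set NStar} (hC : IsClopen C) : ∃ A, star A = C :=
  let ⟨A, h1, h2⟩ := exists_star_between hC.isClosed.isCompact hC.isOpen subset_rfl
  ⟨A, h2.antisymm h1⟩

lemma eq_empty_or_univ_of_mapsTo_sigmaShift {W : Set NStar} (hW : IsClopen W)
    (hσ : MapsTo sigmaShift W W) : W = ∅ ∨ W = univ := by
  obtain ⟨D, rfl⟩ := exists_star_eq_of_isClopen hW
  have hD : {n | n ∈ D ∧ n + 1 ∉ D}.Finite := by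
    rw [← star_eq_empty_iff, eq_empty_iff_forall_notMem]
    intro u hu
    have hσu : (· + 1) ⁻¹' D ∈ u.1 := hσ (mem_of_superset hu fun n hn => hn.1)
    obtain ⟨n, hn, hn'⟩ := Ultrafilter.nonempty_of_mem (inter_mem hu hσu)
    exact hn.2 hn'
  exact (Nat.finite_or_finite_compl_of_finite_boundary hD).imp star_eq_empty_iff.2
    star_eq_univ_of_finite_compl

lemma eq_empty_or_univ_of_mapsTo_of_mem_isoSigma {h : NStar ≃ₜ NStar} (hh : h ∈ IsoSigma)
    {W : Set NStar} (hW : IsClopen W) (hhW : MapsTo h W W) : W = ∅ ∨ W = univ := by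
  obtain ⟨j, hj⟩ := hh
  have hjW : IsClopen (j '' W) := by
    rw [j.image_eq_preimage_symm]
    exact hW.preimage j.symm.continuous
  have hσ : MapsTo sigmaShift (j '' W) (j '' W) := by
    rintro _ ⟨u, hu, rfl⟩
    exact ⟨h u, hhW hu, hj u⟩
  rw [← j.preimage_image W]
  rcases eq_empty_or_univ_of_mapsTo_sigmaShift hjW hσ with h' | h' <;> simp [h']

/-- The basic open set `⋂_{(A, B) ∈ L} V(A*, B*)` of `H(ω*)`. -/
def basicOpen (L : Finset (Set ℕ × Set ℕ)) : Set (NStar ≃ₜ NStar) :=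
  {h | ∀ c ∈ L, MapsTo h (star c.1) (star c.2)}

lemma isOpen_basicOpen (L : Finset (Set ℕ × Set ℕ)) : IsOpen (basicOpen L) := by
  have : basicOpen L = ⋂ c ∈ L, {h : NStar ≃ₜ NStar | MapsTo h (star c.1) (star c.2)} := by
    ext; simp [basicOpen]
  rw [this]
  exact isOpen_biInter_finset fun c _ => isOpen_generateFrom_of_mem
    ⟨_, _, (isClopen_star c.1).isClosed.isCompact, (isClopen_star c.2).isOpen, rfl⟩

lemma basicOpen_anti {L M : Finset (Set ℕ × Set ℕ)} (h : L ⊆ M) : basicOpen M ⊆ basicOpen L :=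
  fun _ hg c hc => hg c (h hc)

lemma basicOpen_union [DecidableEq (Set ℕ × Set ℕ)] (L M : Finset (Set ℕ × Set ℕ)) :
    basicOpen (L ∪ M) = basicOpen L ∩ basicOpen M := by
  ext h
  simp only [basicOpen, Finset.mem_union, or_imp, forall_and, mem_inter_iff, mem_setOf_eq]

lemma exists_star_mapsTo {h : NStar ≃ₜ NStar} {K U : Set NStar} (hK : IsCompact K)
    (hU : IsOpen U) (hKU : MapsTo h K U) :
    ∃ A B : Set ℕ, K ⊆ star A ∧ star B ⊆ U ∧ MapsTo h (star A) (star B) := by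
  obtain ⟨A, hKA, hAU⟩ := exists_star_between hK (hU.preimage h.continuous) hKU
  obtain ⟨B, hAB, hBU⟩ := exists_star_between ((isClopen_star A).isClosed.isCompact.image
    h.continuous) hU (image_subset_iff.2 hAU)
  exact ⟨A, B, hKA, hBU, mapsTo_iff_image_subset.2 hAB⟩

lemma exists_basicOpen_subset {O : Set (NStar ≃ₜ NStar)} (hO : IsOpen O) {h : NStar ≃ₜ NStar}
    (hh : h ∈ O) : ∃ L, h ∈ basicOpen L ∧ basicOpen L ⊆ O := by
  classical
  obtain ⟨_, ⟨F, ⟨hF, hFsub⟩, rfl⟩, hhF, hFO⟩ :=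
    (isTopologicalBasis_of_subbasis rfl).exists_subset_of_mem_open hh hO
  have key : ∀ T ∈ F, ∃ c : Set ℕ × Set ℕ, MapsTo h (star c.1) (star c.2) ∧
      ∀ g : NStar ≃ₜ NStar, MapsTo g (star c.1) (star c.2) → g ∈ T := by
    intro T hT
    obtain ⟨K, U, hK, hU, rfl⟩ := hFsub hT
    obtain ⟨A, B, hKA, hBU, hAB⟩ := exists_star_mapsTo hK hU (hhF _ hT)
    exact ⟨(A, B), hAB, fun g hg x hx => hBU (hg (hKA hx))⟩
  choose! c hc hcT using key
  refine ⟨hF.toFinset.image c, by simpa [basicOpen] using hc, fun g hg => hFO fun T hT =>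
    hcT T hT g (hg _ (Finset.mem_image_of_mem c (hF.mem_toFinset.2 hT)))⟩

lemma exists_basicOpen_subset_subtype {S : Set (NStar ≃ₜ NStar)} {O : Set S} (hO : IsOpen O)
    {h : S} (hh : h ∈ O) : ∃ L, h.1 ∈ basicOpen L ∧ ∀ g : S, g.1 ∈ basicOpen L → g ∈ O := by
  obtain ⟨O', hO', rfl⟩ := isOpen_induced_iff.mp hO
  obtain ⟨L, hhL, hLO⟩ := exists_basicOpen_subset hO' hh
  exact ⟨L, hhL, fun g hg => hLO hg⟩

lemma exists_seq_basicOpen {S : Set (NStar ≃ₜ NStar)} (U : ℕ → Set S)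
    (hU : ∀ n, IsOpen (U n) ∧ Dense (U n)) {L₀ : Finset (Set ℕ × Set ℕ)} {h₀ : S}
    (h₀L₀ : h₀.1 ∈ basicOpen L₀) :
    ∃ (L : ℕ → Finset (Set ℕ × Set ℕ)) (H : ℕ → S), L 0 = L₀ ∧ Monotone L ∧
      ∀ n, (H n).1 ∈ basicOpen (L n) ∧ ∀ g : S, g.1 ∈ basicOpen (L (n + 1)) → g ∈ U n := by
  classical
  obtain ⟨f, hf0, hf⟩ := exists_seq_of_forall_exists
    (p := fun _ (q : Finset (Set ℕ × Set ℕ) × S) => q.2.1 ∈ basicOpen q.1)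
    (r := fun n q q' => q.1 ⊆ q'.1 ∧ ∀ g : S, g.1 ∈ basicOpen q'.1 → g ∈ U n)
    (a := (L₀, h₀)) h₀L₀ fun n ⟨L, H⟩ hH => by
      have hV : IsOpen {g : S | g.1 ∈ basicOpen L} :=
        (isOpen_basicOpen L).preimage continuous_subtype_val
      obtain ⟨g, hgU, hgL⟩ := (hU n).2.exists_mem_open hV ⟨H, hH⟩
      obtain ⟨M, hgM, hMU⟩ := exists_basicOpen_subset_subtype (hU n).1 hgU
      refine ⟨(L ∪ M, g), ?_, Finset.subset_union_left, fun g' hg' => hMU g' ?_⟩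
      · exact (basicOpen_union L M).symm ▸ ⟨hgL, hgM⟩
      · exact ((basicOpen_union L M) ▸ hg').2
  exact ⟨fun n => (f n).1, fun n => (f n).2, congrArg Prod.fst hf0,
    monotone_nat_of_le_succ fun n => (hf n).2.1, fun n => ⟨(hf n).1, (hf n).2.2⟩⟩

section Atoms

variable {L M : Finset (Set ℕ × Set ℕ)} {h : NStar ≃ₜ NStar} {a b w : ℕ}

/-- The atom of `a` in the Boolean algebra generated by the first components of `L`. -/
def atom (L : Finset (Set ℕ × Set ℕ)) (a : ℕ) : Set ℕ := {b | ∀ c ∈ L, (a ∈ c.1 ↔ b ∈ c.1)}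

def Legal (L : Finset (Set ℕ × Set ℕ)) (a b : ℕ) : Prop := ∀ c ∈ L, a ∈ c.1 → b ∈ c.2

def Accessible (L : Finset (Set ℕ × Set ℕ)) (w : ℕ) : Prop :=
  (atom L w).Infinite ∧ ∃ a, (atom L a).Infinite ∧ Legal L a w

lemma mem_atom_self : a ∈ atom L a := fun _ _ => Iff.rfl

lemma atom_eq_of_mem (h : b ∈ atom L a) : atom L b = atom L a :=
  ext fun m => forall₂_congr fun c hc => by rw [h c hc]

lemma legal_iff_of_mem_atom (h : b ∈ atom L a) {m : ℕ} : Legal L b m ↔ Legal L a m :=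
  forall₂_congr fun c hc => by rw [h c hc]

lemma Legal.of_subset (hLM : L ⊆ M) (h : Legal M a b) : Legal L a b :=
  fun c hc => h c (hLM hc)

lemma Accessible.of_subset (hLM : L ⊆ M) (h : Accessible M w) : Accessible L w := by
  obtain ⟨hw, a, ha, haw⟩ := h
  have hatom : ∀ m, atom M m ⊆ atom L m := fun m b hb c hc => hb c (hLM hc)
  exact ⟨hw.mono (hatom w), a, ha.mono (hatom a), haw.of_subset hLM⟩

lemma accessible_empty (w : ℕ) : Accessible ∅ w := by
  have : ∀ m, atom ∅ m = univ := fun m => eq_univ_of_forall fun b c hc => absurd hc (by simp)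
  exact ⟨this w ▸ infinite_univ, 0, this 0 ▸ infinite_univ, fun c hc => absurd hc (by simp)⟩

lemma exists_mem_atom_mem (L : Finset (Set ℕ × Set ℕ)) {p : Ultrafilter ℕ} {Y : Set ℕ}
    (hY : Y ∈ p) : ∃ a ∈ Y, atom L a ∈ p := by
  have hA : {b | ∀ c ∈ L, (b ∈ c.1 ↔ c.1 ∈ p)} ∈ p := by
    refine (eventually_all_finset L).2 fun c _ => ?_
    by_cases hc : c.1 ∈ p
    · filter_upwards [hc] with b hb using iff_of_true hb hc
    · filter_upwards [Ultrafilter.compl_mem_iff_notMem.2 hc] with b hb using iff_of_false hb hc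
  obtain ⟨a, haY, haA⟩ := Ultrafilter.nonempty_of_mem (inter_mem hY hA)
  exact ⟨a, haY, mem_of_superset hA fun b hb c hc => (haA c hc).trans (hb c hc).symm⟩

lemma mapsTo_star_atom (hh : h ∈ basicOpen L) (a : ℕ) :
    MapsTo h (star (atom L a)) (star {b | Legal L a b}) := by
  intro u hu
  refine (eventually_all_finset L).2 fun c hc => ?_
  by_cases hac : a ∈ c.1
  · exact mem_of_superset (hh c hc (star_mono (fun b hb => (hb c hc).1 hac) hu))
      fun b hb _ => hb
  · exact Eventually.of_forall fun b hb => absurd hb hac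

lemma infinite_setOf_legal (hh : h ∈ basicOpen L) (ha : (atom L a).Infinite) :
    {b | Legal L a b}.Infinite :=
  let ⟨u, hu⟩ := exists_mem_of_infinite ha
  (h u).infinite_of_mem (mapsTo_star_atom hh a hu)

lemma finite_setOf_atom_finite (L : Finset (Set ℕ × Set ℕ)) : {a | (atom L a).Finite}.Finite := by
  by_contra hinf
  obtain ⟨u, hu⟩ := exists_mem_of_infinite hinf
  obtain ⟨a, ha, hau⟩ := exists_mem_atom_mem L hu
  exact u.infinite_of_mem hau ha

lemma finite_setOf_not_accessible (hh : h ∈ basicOpen L) : {w | ¬Accessible L w}.Finite := by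
  have hZ : {w | ∀ a, (atom L a).Infinite → ¬Legal L a w}.Finite := by
    by_contra hinf
    obtain ⟨q, hq⟩ := exists_mem_of_infinite hinf
    obtain ⟨a, -, ha⟩ := exists_mem_atom_mem L (p := (h.symm q).1) univ_mem
    have hqa := mapsTo_star_atom hh a ha
    rw [h.apply_symm_apply] at hqa
    obtain ⟨w, hw, hwa⟩ := Ultrafilter.nonempty_of_mem (inter_mem hq hqa)
    exact hw a ((h.symm q).infinite_of_mem ha) hwa
  refine ((finite_setOf_atom_finite L).union hZ).subset fun w hw => ?_
  simp only [Accessible, not_and, not_exists] at hw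
  by_cases hwL : (atom L w).Finite
  · exact Or.inl hwL
  · exact Or.inr fun a ha haw => hw hwL a ha haw

end Atoms

def mapPerm (e : ℕ ≃ ℕ) (u : NStar) : NStar :=
  ⟨u.1.map e, fun n hn => u.2 (e.symm n) <| by
    rw [← Ultrafilter.map_pure, ← hn, Ultrafilter.map_map, e.symm_comp_self, Ultrafilter.map_id]⟩

lemma mapPerm_symm_mapPerm (e : ℕ ≃ ℕ) (u : NStar) : mapPerm e.symm (mapPerm e u) = u :=
  Subtype.ext <| by
    simp only [mapPerm, Ultrafilter.map_map, e.symm_comp_self, Ultrafilter.map_id]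

def homeoOfPerm (e : ℕ ≃ ℕ) : NStar ≃ₜ NStar where
  toFun := mapPerm e
  invFun := mapPerm e.symm
  left_inv := mapPerm_symm_mapPerm e
  right_inv := mapPerm_symm_mapPerm e.symm
  continuous_toFun := ((continuous_umap e).comp continuous_subtype_val).subtype_mk _
  continuous_invFun := ((continuous_umap e.symm).comp continuous_subtype_val).subtype_mk _

def shiftAlong (x : ℕ ≃ ℕ) : NStar ≃ₜ NStar :=
  ((homeoOfPerm x).symm.trans sigmaShift).trans (homeoOfPerm x)

lemma shiftAlong_mem_isoSigma (x : ℕ ≃ ℕ) : shiftAlong x ∈ IsoSigma :=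
  ⟨(homeoOfPerm x).symm, fun u => by simp [shiftAlong]⟩

lemma shiftAlong_val (x : ℕ ≃ ℕ) (u : NStar) :
    (shiftAlong x u).1 = u.1.map fun m => x (x.symm m + 1) := by
  change ((u.1.map x.symm).map (· + 1)).map x = _
  simp only [Ultrafilter.map_map]
  rfl

lemma isTrivialHomeo_shiftAlong (x : ℕ ≃ ℕ) : IsTrivialHomeo (shiftAlong x) := by
  refine ⟨fun m => x (x.symm m + 1), ⟨∅, {x 0}, finite_empty, finite_singleton _,
    fun m _ => ?_, fun m _ m' _ h => ?_, fun m hm => ?_⟩, fun u A hA => ?_⟩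
  · simp
  · simpa using h
  · have : x.symm m ≠ 0 := fun h => hm (by simp [← h])
    exact ⟨x (x.symm m - 1), by simp, by simp [Nat.sub_add_cancel (Nat.pos_of_ne_zero this)]⟩
  · rw [shiftAlong_val]
    exact Ultrafilter.mem_map.2 (mem_of_superset hA (subset_preimage_image _ _))

lemma shiftAlong_mem_basicOpen {x : ℕ ≃ ℕ} {L : Finset (Set ℕ × Set ℕ)}
    (hx : ∀ᶠ i in atTop, Legal L (x i) (x (i + 1))) : shiftAlong x ∈ basicOpen L := by
  rw [← Nat.cofinite_eq_atTop] at hx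
  have hm : ∀ᶠ m in cofinite, Legal L m (x (x.symm m + 1)) := by
    simpa using x.symm.injective.tendsto_cofinite.eventually hx
  intro c hc u hu
  change c.2 ∈ (shiftAlong x u).1
  rw [shiftAlong_val, Ultrafilter.mem_map]
  filter_upwards [ucofinite u hm, (hu : c.1 ∈ u.1)] with m hm hmc using hm c hc hmc

section Paths

variable {L M : Finset (Set ℕ × Set ℕ)} {h : NStar ≃ₜ NStar} {a b w : ℕ}

def Abundant (L : Finset (Set ℕ × Set ℕ)) (a b : ℕ) : Prop :=
  ({m | Legal L a m} ∩ atom L b).Infinite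

lemma exists_reflTransGen_abundant (hIso : h ∈ IsoSigma) (hh : h ∈ basicOpen L)
    (ha : (atom L a).Infinite) (hb : (atom L b).Infinite) :
    ∃ b' ∈ atom L b, Relation.ReflTransGen (Abundant L) a b' := by
  set Y := {m | ∃ c, Relation.ReflTransGen (Abundant L) a c ∧ m ∈ atom L c}
  have hY : ∀ p : Ultrafilter ℕ, Y ∈ p →
      ∃ c, Relation.ReflTransGen (Abundant L) a c ∧ atom L c ∈ p := by
    intro p hp
    obtain ⟨m, ⟨c, hc, hmc⟩, hm⟩ := exists_mem_atom_mem L hp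
    exact ⟨c, hc, atom_eq_of_mem hmc ▸ hm⟩
  have hmaps : MapsTo h (star Y) (star Y) := by
    intro u hu
    obtain ⟨c, hc, hcu⟩ := hY u.1 hu
    obtain ⟨d, -, hd⟩ := exists_mem_atom_mem L (p := (h u).1) univ_mem
    have hcd : Abundant L c d := (h u).infinite_of_mem (inter_mem (mapsTo_star_atom hh c hcu) hd)
    exact mem_of_superset hd fun m hm => ⟨d, hc.tail hcd, hm⟩
  have hYuniv : star Y = univ := by
    refine (eq_empty_or_univ_of_mapsTo_of_mem_isoSigma hIso (isClopen_star Y) hmaps).resolve_left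
      fun hY0 => ?_
    obtain ⟨u, hu⟩ := exists_mem_of_infinite ha
    exact hY0.subset (star_mono (B := Y) (fun m hm => ⟨a, .refl, hm⟩) hu)
  obtain ⟨u, hu⟩ := exists_mem_of_infinite hb
  obtain ⟨c, hc, hcu⟩ := hY u.1 (hYuniv.symm ▸ mem_univ u : u ∈ star Y)
  obtain ⟨m, hmc, hmb⟩ := Ultrafilter.nonempty_of_mem (inter_mem hcu hu)
  refine ⟨c, ?_, hc⟩
  rw [← atom_eq_of_mem hmb, atom_eq_of_mem hmc]
  exact mem_atom_self

lemma exists_legal_path_of_reflTransGen {T : Set ℕ}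
    (hab : Relation.ReflTransGen (Abundant L) a b) (hbT : ({m | Legal L b m} ∩ T).Infinite) :
    ∀ a' ∈ atom L a, ∀ F : Set ℕ, F.Finite → ∃ l : List ℕ, l.Nodup ∧ (∀ m ∈ l, m ∉ F) ∧
      (a' :: l).IsChain (Legal L) ∧ ∀ e ∈ (a' :: l).getLast?, e ∈ T := by
  induction hab using Relation.ReflTransGen.head_induction_on with
  | refl =>
    intro a' ha' F hF
    obtain ⟨e, ⟨hbe, heT⟩, heF⟩ := hbT.exists_notMem_finite hF
    exact ⟨[e], by simp, by simpa using heF, by simpa using (legal_iff_of_mem_atom ha').2 hbe,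
      by simpa using heT⟩
  | head hac _ ih =>
    intro a' ha' F hF
    obtain ⟨d, ⟨had, hdc⟩, hdF⟩ := hac.exists_notMem_finite hF
    obtain ⟨l, hl, hlF, hchain, hlast⟩ := ih d hdc (insert d F) (hF.insert d)
    refine ⟨d :: l, ?_, ?_, ?_, by simpa using hlast⟩
    · exact List.nodup_cons.2 ⟨fun hd => hlF d hd (mem_insert d F), hl⟩
    · simp only [List.mem_cons, forall_eq_or_imp]
      exact ⟨hdF, fun m hm hmF => hlF m hm (mem_insert_of_mem d hmF)⟩
    · exact List.isChain_cons_cons.2 ⟨(legal_iff_of_mem_atom ha').2 had, hchain⟩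

lemma exists_legal_path (hIso : h ∈ IsoSigma) (hh : h ∈ basicOpen L) (ha : (atom L a).Infinite)
    {T : Set ℕ} (hT : T.Infinite) {F : Set ℕ} (hF : F.Finite) :
    ∃ l : List ℕ, l.Nodup ∧ (∀ m ∈ l, m ∉ F) ∧
      (a :: l).IsChain (Legal L) ∧ ∀ e ∈ (a :: l).getLast?, e ∈ T := by
  obtain ⟨q, hq⟩ := exists_mem_of_infinite hT
  obtain ⟨b, -, hb⟩ := exists_mem_atom_mem L (p := (h.symm q).1) univ_mem
  obtain ⟨b', hb', hab'⟩ :=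
    exists_reflTransGen_abundant hIso hh ha ((h.symm q).infinite_of_mem hb)
  have hqb := mapsTo_star_atom hh b hb
  rw [h.apply_symm_apply] at hqb
  have hbT : ({m | Legal L b' m} ∩ T).Infinite := by
    simp_rw [legal_iff_of_mem_atom hb']
    exact q.infinite_of_mem (inter_mem hqb hq)
  exact exists_legal_path_of_reflTransGen hab' hbT a mem_atom_self F hF

lemma exists_legal_path_through (hIso : h ∈ IsoSigma) (hh : h ∈ basicOpen L) (hML : M ⊆ L)
    (hw : Accessible M w) (ha : (atom L a).Infinite) {F : Set ℕ} (hF : F.Finite) (hwF : w ∉ F)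
    (L' : Finset (Set ℕ × Set ℕ)) :
    ∃ l b, (l ++ [w, b]).Nodup ∧ (∀ m ∈ l ++ [w, b], m ∉ F) ∧
      (a :: (l ++ [w, b])).IsChain (Legal M) ∧ (atom L' b).Infinite := by
  obtain ⟨hwinf, u, hu, huw⟩ := hw
  obtain ⟨l, hl, hlF, hchain, hlast⟩ := exists_legal_path hIso hh ha hu (hF.insert w)
  obtain ⟨b, hwb, hbF⟩ := (infinite_setOf_legal (basicOpen_anti hML hh) hwinf).exists_notMem_finite
    ((finite_setOf_atom_finite L').union ((hF.insert w).union l.finite_toSet))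
  simp only [mem_union, mem_insert_iff, mem_setOf_eq, not_or] at hbF
  obtain ⟨hbL', ⟨hbw, hbF⟩, hbl⟩ := hbF
  have hwl : w ∉ l := fun hw => hlF w hw (mem_insert w F)
  refine ⟨l, b, by grind [List.nodup_append, List.nodup_cons], ?_, ?_, hbL'⟩
  · simp only [List.mem_append, List.mem_cons, List.not_mem_nil, or_false]
    rintro m (hm | rfl | rfl)
    exacts [fun hmF => hlF m hm (mem_insert_of_mem w hmF), hwF, hbF]
  · rw [← List.cons_append]
    refine (hchain.imp fun x y hxy => hxy.of_subset hML).append (List.isChain_pair.2 hwb) ?_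
    simp only [List.head?_cons, Option.mem_def, Option.some.injEq, forall_eq']
    exact fun x hx => (legal_iff_of_mem_atom (hlast x hx)).2 huw

end Paths

section Stages

variable {L : ℕ → Finset (Set ℕ × Set ℕ)}

lemma exists_level (hL : Monotone L) (n w : ℕ) :
    ∃ M, M ⊆ L n ∧ Accessible M w ∧ ∀ k ≤ n, Accessible (L k) w → L k ⊆ M := by
  classical
  by_cases hex : ∃ k ≤ n, Accessible (L k) w
  · obtain ⟨k, hk, hkw⟩ := hex
    exact ⟨L (Nat.findGreatest (fun k => Accessible (L k) w) n), hL (Nat.findGreatest_le n),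
      Nat.findGreatest_spec (P := fun k => Accessible (L k) w) hk hkw,
      fun j hj hjw => hL (Nat.le_findGreatest hj hjw)⟩
  · push Not at hex
    exact ⟨∅, Finset.empty_subset _, accessible_empty w, fun k hk hkw => absurd hkw (hex k hk)⟩

/-- The point `w` inserted at stage `n` is entered and left legally for the largest level at which
it is accessible; so a level `L N` is violated only at the finitely many stages whose point is
inaccessible for `L N`, and at the stages before `N`. -/
def LegalUpTo (L : ℕ → Finset (Set ℕ × Set ℕ)) (n w a b : ℕ) : Prop :=
  ∀ k ≤ n, Accessible (L k) w → Legal (L k) a b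

lemma exists_segment (hL : Monotone L) {n : ℕ} {h : NStar ≃ₜ NStar} (hIso : h ∈ IsoSigma)
    (hh : h ∈ basicOpen (L n)) {p : List ℕ} (hp : p.Nodup) {a : ℕ}
    (ha : (atom (L n) a).Infinite) :
    ∃ seg, (p ++ seg).Nodup ∧ firstMissing p ∈ seg ∧
      (∃ b ∈ seg.getLast?, (atom (L (n + 1)) b).Infinite) ∧
      (a :: seg).IsChain (LegalUpTo L n (firstMissing p)) := by
  obtain ⟨M, hMn, hMw, hmax⟩ := exists_level hL n (firstMissing p)
  obtain ⟨l, b, hnd, hF, hchain, hb⟩ := exists_legal_path_through hIso hh hMn hMw ha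
    p.finite_toSet (firstMissing_notMem p) (L (n + 1))
  exact ⟨l ++ [firstMissing p, b], List.nodup_append.2 ⟨hp, hnd, fun x hx y hy hxy =>
    hF y hy (hxy ▸ hx)⟩, by simp, ⟨b, by simp, hb⟩,
    hchain.imp fun x y hxy k hk hkw => hxy.of_subset (hmax k hk hkw)⟩

lemma exists_stages (hL : Monotone L) {H : ℕ → NStar ≃ₜ NStar}
    (hH : ∀ n, H n ∈ IsoSigma ∧ H n ∈ basicOpen (L n)) :
    ∃ P : ℕ → List ℕ, P 0 ≠ [] ∧ ∀ n, (P n).Nodup ∧ ∃ seg, P (n + 1) = P n ++ seg ∧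
      firstMissing (P n) ∈ seg ∧ seg.IsChain (LegalUpTo L n (firstMissing (P n))) ∧
      ∀ a ∈ (P n).getLast?, ∀ b ∈ seg.head?, LegalUpTo L n (firstMissing (P n)) a b := by
  obtain ⟨z, hz⟩ := (finite_setOf_atom_finite (L 0)).infinite_compl.nonempty
  obtain ⟨P, hP0, hP⟩ := exists_seq_of_forall_exists
    (p := fun n p => p.Nodup ∧ ∃ a ∈ p.getLast?, (atom (L n) a).Infinite)
    (r := fun n p q => ∃ seg, q = p ++ seg ∧ firstMissing p ∈ seg ∧
      seg.IsChain (LegalUpTo L n (firstMissing p)) ∧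
      ∀ a ∈ p.getLast?, ∀ b ∈ seg.head?, LegalUpTo L n (firstMissing p) a b)
    (a := [z]) ⟨List.nodup_singleton z, z, rfl, hz⟩ fun n p ⟨hp, a, ha, hainf⟩ => by
      obtain ⟨seg, hnd, hw, ⟨b, hb, hbinf⟩, hchain⟩ :=
        exists_segment hL (hH n).1 (hH n).2 hp hainf
      rw [List.isChain_cons] at hchain
      exact ⟨p ++ seg, ⟨hnd, b, by simp [Option.mem_def.1 hb], hbinf⟩, seg, rfl, hw, hchain.2,
        fun a' ha' => Option.mem_unique ha ha' ▸ hchain.1⟩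
  exact ⟨P, hP0 ▸ List.cons_ne_nil z [], fun n => ⟨(hP n).1.1, (hP n).2⟩⟩

theorem exists_equiv_eventually_legal (hL : Monotone L) {H : ℕ → NStar ≃ₜ NStar}
    (hH : ∀ n, H n ∈ IsoSigma ∧ H n ∈ basicOpen (L n)) :
    ∃ x : ℕ ≃ ℕ, ∀ N, ∀ᶠ i in atTop, Legal (L N) (x i) (x (i + 1)) := by
  obtain ⟨P, hP0, hP⟩ := exists_stages hL hH
  have hpre : ∀ n, P n <+: P (n + 1) := fun n =>
    let ⟨_, h, _⟩ := (hP n).2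
    h ▸ List.prefix_append _ _
  have hmiss : ∀ n, firstMissing (P n) ∈ P (n + 1) := fun n =>
    let ⟨_, h, hw, _⟩ := (hP n).2
    h ▸ List.mem_append_right _ hw
  have hlen : ∀ n, n < (P n).length := by
    intro n
    induction n with
    | zero => exact List.length_pos_iff.2 hP0
    | succ n ih =>
      obtain ⟨seg, h, hw, -⟩ := (hP n).2
      rw [h, List.length_append]
      have := List.length_pos_of_mem hw
      omega
  obtain ⟨x, hx⟩ := exists_equiv_getElem_eq hpre hlen (fun n => (hP n).1)
    (exists_mem_of_firstMissing_mem hpre hmiss)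
  refine ⟨x, fun N => ?_⟩
  have hacc : ∀ᶠ n in atTop, Accessible (L N) (firstMissing (P n)) := by
    rw [← Nat.cofinite_eq_atTop]
    exact eventually_cofinite.2 ((finite_setOf_not_accessible (hH N).2).preimage
      (injective_firstMissing hpre hmiss).injOn)
  obtain ⟨j, hj⟩ := exists_isChain_drop (S := Legal (L N))
      (fun n => let ⟨seg, h, _, hchain, hjoin⟩ := (hP n).2; ⟨seg, h, hchain, hjoin⟩) <| by
    filter_upwards [eventually_ge_atTop N, hacc] with n hn hnacc a b hab using hab N hn hnacc
  exact eventually_rel_of_isChain_drop hlen hx hj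

end Stages

end NStar

open NStar

/-- If `{U_n : n ∈ ω}` is a countable family of dense open subsets of the subspace
`Iso(σ)` of `H(ω*)`, then the set of trivial maps belonging to `⋂ n, U n` is dense
in `Iso(σ)`. -/
theorem stmt_17 (U : ℕ → Set ↥IsoSigma)
    (hU : ∀ n, IsOpen (U n) ∧ Dense (U n)) :
    Dense {h : ↥IsoSigma | (∀ n, h ∈ U n) ∧ IsTrivialHomeo h.1} := by
  refine dense_iff_inter_open.2 fun O hO ⟨h₀, hh₀⟩ => ?_
  obtain ⟨L₀, hh₀L₀, hL₀O⟩ := exists_basicOpen_subset_subtype hO hh₀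
  obtain ⟨L, H, rfl, hL, hLH⟩ := exists_seq_basicOpen U hU hh₀L₀
  obtain ⟨x, hx⟩ := exists_equiv_eventually_legal hL fun n => ⟨(H n).2, (hLH n).1⟩
  have hmem : ∀ N, shiftAlong x ∈ basicOpen (L N) := fun N => shiftAlong_mem_basicOpen (hx N)
  exact ⟨⟨shiftAlong x, shiftAlong_mem_isoSigma x⟩, hL₀O _ (hmem 0),
    fun n => (hLH n).2 _ (hmem (n + 1)), isTrivialHomeo_shiftAlong x⟩
end
end
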